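/- Let R be a commutative ring and let r ∈ R be a non-zerodivisor of R. Then: (1) Int(R; rR) = Int(R; r), i.e., a polynomial f ∈ Int(R) preserves congruences modulo the ideal rR (meaning a ≡ b mod rR implies f(a) ≡ f(b) mod rR for all a, b ∈ R) if and only if y·Δ_{yr}f ∈ Int(R) for all y ∈ R; and (2) Int(R, rR) = r·Int(R), i.e., a polynomial f ∈ Int(R) satisfies f(a) ∈ rR for all a ∈ R if and only if f = r·g for some g ∈ Int(R). -/

import Mathlib

/-!
Evaluating `f(X + Y) = f(X) + Y·G(X, Y)` at `X = a`, `Y = yr` gives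
`f(a + yr) − f(a) = r · (y·Δ_{yr} f)(a)`. Since `r` is a unit of `T(R)`, an element `r·z` of
`T(R)` lies in `rR` exactly when `z` lies in `R`; with `a − b = yr` this turns (1) into a
pointwise statement, and (2) follows in the same way from `f(a) = r·g(a)`.
-/

open Polynomial

/-- `IsDeltaWitness f G` says that `G = G(X,Y) ∈ S[X][Y]` is the (unique) two-variable
polynomial with `f(X+Y) − f(X) = Y·G(X,Y)`; then `Δ_c f = G(X,c)` for `c ∈ S`. -/
def IsDeltaWitness {S : Type*} [CommRing S] (f : Polynomial S)
    (G : Polynomial (Polynomial S)) : Prop :=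
  f.eval₂ (Polynomial.C.comp Polynomial.C) (Polynomial.C X + X) = Polynomial.C f + X * G

/-- The set `Int(R)` of integer-valued polynomials on `R`, over `K = T(R) = FractionRing R`. -/
def IntPoly (R : Type*) [CommRing R] : Set (Polynomial (FractionRing R)) :=
  {f | ∀ a : R, f.eval (algebraMap R (FractionRing R) a) ∈ Set.range (algebraMap R (FractionRing R))}

theorem exists_isDeltaWitness {S : Type*} [CommRing S] (f : S[X]) :
    ∃ G, IsDeltaWitness f G := by
  have hC : C f = f.eval₂ (C.comp C) (C X) := by
    rw [← hom_eval₂, eval₂_C_X]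
  obtain ⟨G, hG⟩ := sub_dvd_eval_sub (C X + X : S[X][X]) (C X) (f.map (C.comp C))
  refine ⟨G, ?_⟩
  rw [eval_map, eval_map, add_sub_cancel_left, ← hC] at hG
  rw [IsDeltaWitness, ← hG, add_sub_cancel]

namespace IsDeltaWitness

variable {S : Type*} [CommRing S]

theorem eval_add {f : S[X]} {G : S[X][X]} (hG : IsDeltaWitness f G) (a c : S) :
    f.eval (a + c) = f.eval a + c * (G.eval (C c)).eval a := by
  let φ := (evalRingHom a).comp (evalRingHom (C c))
  have hφ : φ.comp (C.comp C) = RingHom.id S := by ext; simp [φ]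
  have h := congrArg φ hG
  rw [hom_eval₂, hφ, eval₂_id] at h
  simpa [φ, add_comm] using h

theorem eval_add_mul_sub {f : S[X]} {G : S[X][X]} (hG : IsDeltaWitness f G) (a y r : S) :
    f.eval (a + y * r) - f.eval a = r * (C y * G.eval (C (y * r))).eval a := by
  rw [hG.eval_add, eval_mul, eval_C]
  ring

end IsDeltaWitness

theorem forall_sub_eq_mul_imp_iff {R : Type*} [CommRing R] (r : R) (P : R → R → Prop) :
    (∀ a b, (∃ c, a - b = r * c) → P a b) ↔ ∀ y b, P (b + y * r) b := by
  refine ⟨fun h y b ↦ h _ _ ⟨y, by ring⟩, ?_⟩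
  rintro h a b ⟨c, hc⟩
  obtain rfl : a = b + c * r := by linear_combination hc
  exact h c b

theorem Units.exists_mem_eq_mul_iff {M : Type*} [Monoid M] (v : Mˣ) (P : Set M) (f : M) :
    (∃ g ∈ P, f = v * g) ↔ ↑v⁻¹ * f ∈ P := by
  refine ⟨?_, fun h ↦ ⟨_, h, (v.mul_inv_cancel_left f).symm⟩⟩
  rintro ⟨g, hg, rfl⟩
  rwa [v.inv_mul_cancel_left]

theorem exists_algebraMap_mul_eq_iff {R S : Type*} [CommRing R] [CommRing S] [Algebra R S]
    {r : R} (hr : IsUnit (algebraMap R S r)) (z : S) :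
    (∃ c, algebraMap R S r * z = algebraMap R S (r * c)) ↔
      z ∈ Set.range (algebraMap R S) := by
  simp only [map_mul, hr.mul_right_inj, Set.mem_range, eq_comm]

theorem forall_exists_eval_C_mul_eq_iff {R : Type*} [CommRing R] {r : R}
    (hr : IsUnit (algebraMap R (FractionRing R) r)) (g : (FractionRing R)[X]) :
    (∀ a : R, ∃ c : R, (C (algebraMap R _ r) * g).eval (algebraMap R _ a) =
        algebraMap R _ (r * c)) ↔ g ∈ IntPoly R := by
  simp only [eval_mul, eval_C, exists_algebraMap_mul_eq_iff hr]
  rfl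

theorem forall_exists_eval_eq_algebraMap_mul_iff {R : Type*} [CommRing R] {r : R}
    (hr : IsUnit (algebraMap R (FractionRing R) r)) (f : (FractionRing R)[X]) :
    (∀ a : R, ∃ c : R, f.eval (algebraMap R _ a) = algebraMap R _ (r * c)) ↔
      ∃ g ∈ IntPoly R, f = C (algebraMap R _ r) * g := by
  obtain ⟨v, hv⟩ := isUnit_C.mpr hr
  conv_lhs => rw [← v.mul_inv_cancel_left f, hv]
  rw [forall_exists_eval_C_mul_eq_iff hr, ← hv, v.exists_mem_eq_mul_iff]

theorem IsDeltaWitness.congr_mod_iff {R : Type*} [CommRing R] {r : R}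
    (hr : IsUnit (algebraMap R (FractionRing R) r)) {f : (FractionRing R)[X]}
    {G : (FractionRing R)[X][X]} (hG : IsDeltaWitness f G) :
    (∀ a b : R, (∃ c : R, a - b = r * c) → ∃ c : R,
        f.eval (algebraMap R _ a) - f.eval (algebraMap R _ b) = algebraMap R _ (r * c)) ↔
      ∀ y : R, C (algebraMap R _ y) * G.eval (C (algebraMap R _ (y * r))) ∈ IntPoly R := by
  rw [forall_sub_eq_mul_imp_iff]
  refine forall_congr' fun y ↦ forall_congr' fun b ↦ ?_
  rw [map_add, map_mul, hG.eval_add_mul_sub, exists_algebraMap_mul_eq_iff hr]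

/-- Let `r` be a non-zerodivisor of `R`.  Then
(1) `Int(R; rR) = Int(R; r)`: an `f ∈ Int(R)` preserves congruences modulo `rR`
iff `y·Δ_{yr}f ∈ Int(R)` for all `y ∈ R`; and
(2) `Int(R, rR) = r·Int(R)`: an `f ∈ Int(R)` takes all its values on `R` in `rR`
iff `f = r·g` for some `g ∈ Int(R)`. -/
theorem intPoly_mod_nonZeroDivisor (R : Type*) [CommRing R] (r : R)
    (hr : r ∈ nonZeroDivisors R) :
    (∀ f ∈ IntPoly R,
      ((∀ a b : R, (∃ c : R, a - b = r * c) →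
          ∃ c : R,
            f.eval (algebraMap R (FractionRing R) a) - f.eval (algebraMap R (FractionRing R) b)
              = algebraMap R (FractionRing R) (r * c))
        ↔ ∀ y : R, ∀ G, IsDeltaWitness f G →
            Polynomial.C (algebraMap R (FractionRing R) y) *
              G.eval (Polynomial.C (algebraMap R (FractionRing R) (y * r))) ∈ IntPoly R)) ∧
    (∀ f ∈ IntPoly R,
      ((∀ a : R, ∃ c : R,
          f.eval (algebraMap R (FractionRing R) a) = algebraMap R (FractionRing R) (r * c))
        ↔ ∃ g ∈ IntPoly R, f = Polynomial.C (algebraMap R (FractionRing R) r) * g)) := by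
  have hu : IsUnit (algebraMap R (FractionRing R) r) := IsLocalization.map_units _ ⟨r, hr⟩
  refine ⟨fun f _ ↦ ?_, fun f _ ↦ ?_⟩
  · obtain ⟨G₀, hG₀⟩ := exists_isDeltaWitness f
    exact ⟨fun h y G hG ↦ (hG.congr_mod_iff hu).1 h y,
      fun h ↦ (hG₀.congr_mod_iff hu).2 fun y ↦ h y G₀ hG₀⟩
  · exact forall_exists_eval_eq_algebraMap_mul_iff hu f
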